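/- Let H be a graph that is not complete and k > 3. Then γ_gr(C_k ∘ H) = (k/2)·γ_gr(H) if k is even, and γ_gr(C_k ∘ H) = ⌊k/2⌋·γ_gr(H) + 1 if k is odd. -/

import Mathlib

open SimpleGraph

/-- The closed neighborhood of a vertex. -/
def closedNbhd {V : Type*} (G : SimpleGraph V) (v : V) : Set V :=
  insert v (G.neighborSet v)

/-- A legal (closed neighborhood) sequence: distinct vertices, each dominating
a vertex not dominated by its predecessors. -/
def IsLegalSeq {V : Type*} (G : SimpleGraph V) (l : List V) : Prop :=
  l.Nodup ∧ ∀ i : Fin l.length, ∃ u, u ∈ closedNbhd G (l.get i) ∧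
    ∀ j : Fin l.length, (j : ℕ) < (i : ℕ) → u ∉ closedNbhd G (l.get j)

/-- A dominating sequence: a legal sequence whose vertex set dominates the graph. -/
def IsDomSeq {V : Type*} (G : SimpleGraph V) (l : List V) : Prop :=
  IsLegalSeq G l ∧ ∀ v : V, ∃ u ∈ l, v ∈ closedNbhd G u

/-- The Grundy domination number: maximum length of a dominating sequence. -/
noncomputable def grundyDomNum {V : Type*} (G : SimpleGraph V) : ℕ :=
  sSup {n | ∃ l : List V, IsDomSeq G l ∧ l.length = n}

/-- A legal open neighborhood sequence. -/
def IsLegalOpenSeq {V : Type*} (G : SimpleGraph V) (l : List V) : Prop :=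
  l.Nodup ∧ ∀ i : Fin l.length, ∃ u, u ∈ G.neighborSet (l.get i) ∧
    ∀ j : Fin l.length, (j : ℕ) < (i : ℕ) → u ∉ G.neighborSet (l.get j)

/-- A total dominating sequence. -/
def IsTotalDomSeq {V : Type*} (G : SimpleGraph V) (l : List V) : Prop :=
  IsLegalOpenSeq G l ∧ ∀ v : V, ∃ u ∈ l, v ∈ G.neighborSet u

/-- The Grundy total domination number. -/
noncomputable def grundyTotalDomNum {V : Type*} (G : SimpleGraph V) : ℕ :=
  sSup {n | ∃ l : List V, IsTotalDomSeq G l ∧ l.length = n}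

/-- The edge clique cover number: minimum size of a family of cliques covering all edges. -/
noncomputable def edgeCliqueCoverNum {V : Type*} (G : SimpleGraph V) : ℕ :=
  sInf {n | ∃ C : Finset (Set V), C.card = n ∧ (∀ Q ∈ C, G.IsClique Q) ∧
    ∀ u v : V, G.Adj u v → ∃ Q ∈ C, u ∈ Q ∧ v ∈ Q}

/-- The independence number. -/
noncomputable def indepNum {V : Type*} (G : SimpleGraph V) : ℕ :=
  sSup {n | ∃ s : Finset V, (s : Set V).Pairwise (fun u v => ¬ G.Adj u v) ∧ s.card = n}

/-- The lexicographic product of simple graphs. -/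
def lexProd {V W : Type*} (G : SimpleGraph V) (H : SimpleGraph W) : SimpleGraph (V × W) where
  Adj x y := G.Adj x.1 y.1 ∨ (x.1 = y.1 ∧ H.Adj x.2 y.2)
  symm := by
    constructor
    rintro x y (h | ⟨e, h⟩)
    · exact Or.inl h.symm
    · exact Or.inr ⟨e.symm, h.symm⟩
  loopless := by
    constructor
    rintro x (h | ⟨_, h⟩)
    · exact G.irrefl h
    · exact H.irrefl h

/-- The strong product of simple graphs. -/
def strongProd {V W : Type*} (G : SimpleGraph V) (H : SimpleGraph W) : SimpleGraph (V × W) where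
  Adj x y := x ≠ y ∧ (x.1 = y.1 ∨ G.Adj x.1 y.1) ∧ (x.2 = y.2 ∨ H.Adj x.2 y.2)
  symm := by
    constructor
    rintro x y ⟨hne, h1, h2⟩
    refine ⟨hne.symm, ?_, ?_⟩
    · rcases h1 with h | h
      · exact Or.inl h.symm
      · exact Or.inr h.symm
    · rcases h2 with h | h
      · exact Or.inl h.symm
      · exact Or.inr h.symm
  loopless := ⟨fun x h => h.1 rfl⟩

/-- The direct (tensor) product of simple graphs. -/
def directProd {V W : Type*} (G : SimpleGraph V) (H : SimpleGraph W) : SimpleGraph (V × W) where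
  Adj x y := G.Adj x.1 y.1 ∧ H.Adj x.2 y.2
  symm := ⟨fun _ _ h => ⟨h.1.symm, h.2.symm⟩⟩
  loopless := ⟨fun x h => G.irrefl h.1⟩

/-- The boundary of a set of vertices. -/
def boundarySet {V : Type*} (G : SimpleGraph V) (S : Set V) : Set V :=
  {u | u ∉ S ∧ ∃ s ∈ S, G.Adj u s}

/-- `aVal G l` is the number of entries of `l` not adjacent to any earlier entry. -/
def aVal {V : Type*} (G : SimpleGraph V) [DecidableRel G.Adj] (l : List V) : ℕ :=
  (Finset.univ.filter (fun i : Fin l.length =>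
    ∀ j : Fin l.length, (j : ℕ) < (i : ℕ) → ¬ G.Adj (l.get j) (l.get i))).card

theorem List.get_append_left {α : Type*} (as bs : List α) {i : Fin (as ++ bs).length}
    (h : (i:ℕ) < as.length) : (as ++ bs).get i = as.get ⟨i, h⟩ := by
  simp [List.getElem_append_left h]

section Generic
variable {V : Type*} [Fintype V] {G : SimpleGraph V}

lemma mem_closedNbhd {v u : V} : u ∈ closedNbhd G v ↔ u = v ∨ G.Adj v u := by
  simp [closedNbhd]

lemma self_mem_closedNbhd (v : V) : v ∈ closedNbhd G v := mem_closedNbhd.2 (Or.inl rfl)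

lemma domseq_length_le (l : List V) (h : IsDomSeq G l) : l.length ≤ Fintype.card V :=
  h.1.1.length_le_card

lemma bddAbove_dom : BddAbove {n | ∃ l : List V, IsDomSeq G l ∧ l.length = n} := by
  refine ⟨Fintype.card V, fun n hn => ?_⟩
  obtain ⟨l, hl, rfl⟩ := hn
  exact domseq_length_le l hl

/-- any legal sequence extends to a dominating one -/
lemma legal_extends (l : List V) (h : IsLegalSeq G l) :
    ∃ l' : List V, IsDomSeq G l' ∧ l.length ≤ l'.length := by
  by_cases hd : ∀ v : V, ∃ u ∈ l, v ∈ closedNbhd G u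
  · exact ⟨l, ⟨h, hd⟩, le_rfl⟩
  · push_neg at hd
    obtain ⟨v, hv⟩ := hd
    have hvl : v ∉ l := fun hmem => hv v hmem (self_mem_closedNbhd v)
    have hlegal : IsLegalSeq G (l ++ [v]) := by
      constructor
      · rw [List.nodup_append]
        exact ⟨h.1, List.nodup_singleton v, by intro a ha b hb hab; rw [List.mem_singleton] at hb; exact hvl (hb ▸ hab ▸ ha)⟩
      · intro i
        rcases lt_or_ge (i : ℕ) l.length with hi | hi
        · obtain ⟨u, hu1, hu2⟩ := h.2 ⟨i, hi⟩
          refine ⟨u, ?_, ?_⟩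
          · rwa [List.get_append_left _ _ hi]
          · intro j hj
            have hjl : (j : ℕ) < l.length := lt_of_lt_of_le (lt_of_lt_of_le hj (Nat.le_of_lt_succ (by
              simpa using i.2))) (by simpa using hi.le)
            rw [List.get_append_left _ _ hjl]
            exact hu2 ⟨j, hjl⟩ hj
        · -- i is the last position
          have hieq : (i:ℕ) = l.length := by
            have := i.2; simp at this; omega
          refine ⟨v, ?_, ?_⟩
          · have : (l ++ [v]).get i = v := by
              simp [List.getElem_append, hieq]
            rw [this]; exact self_mem_closedNbhd v
          · intro j hj
            have hjl : (j : ℕ) < l.length := by omega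
            rw [List.get_append_left _ _ hjl]
            exact hv _ (List.get_mem l ⟨j, hjl⟩)
    have hlen : (l ++ [v]).length = l.length + 1 := by simp
    obtain ⟨l', hl', hle⟩ := legal_extends (l ++ [v]) hlegal
    exact ⟨l', hl', by omega⟩
termination_by Fintype.card V - l.length
decreasing_by
  have := hlegal.1.length_le_card
  simp at this ⊢
  omega

lemma legal_le_grundy (l : List V) (h : IsLegalSeq G l) : l.length ≤ grundyDomNum G := by
  obtain ⟨l', hl', hle⟩ := legal_extends l h
  exact le_trans hle (le_csSup bddAbove_dom ⟨l', hl', rfl⟩)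

lemma nil_legal : IsLegalSeq G ([] : List V) := ⟨List.nodup_nil, fun i => absurd i.2 (by simp)⟩

lemma exists_dom_grundy [Nonempty V] :
    ∃ l : List V, IsDomSeq G l ∧ l.length = grundyDomNum G := by
  have hne : {n | ∃ l : List V, IsDomSeq G l ∧ l.length = n}.Nonempty := by
    obtain ⟨l', hl', _⟩ := legal_extends ([] : List V) nil_legal
    exact ⟨l'.length, l', hl', rfl⟩
  have := Nat.sSup_mem hne bddAbove_dom
  obtain ⟨l, hl, hlen⟩ := this
  exact ⟨l, hl, hlen⟩

end Generic

lemma mem_closedNbhd' {V : Type*} {G : SimpleGraph V} {v u : V} :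
    u ∈ closedNbhd G v ↔ u = v ∨ G.Adj v u := by simp [closedNbhd]

lemma mem_closedNbhd_lexProd {V W : Type*} {G : SimpleGraph V} {H : SimpleGraph W}
    {a c : V} {b d : W} :
    (a, b) ∈ closedNbhd (lexProd G H) (c, d) ↔ G.Adj c a ∨ (c = a ∧ b ∈ closedNbhd H d) := by
  have hadj : (lexProd G H).Adj (c, d) (a, b) ↔ G.Adj c a ∨ (c = a ∧ H.Adj d b) := Iff.rfl
  rw [mem_closedNbhd', hadj, Prod.ext_iff, mem_closedNbhd']
  simp only []
  constructor
  · rintro (⟨h1, h2⟩ | h | ⟨h1, h2⟩)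
    · exact Or.inr ⟨h1.symm, Or.inl h2⟩
    · exact Or.inl h
    · exact Or.inr ⟨h1, Or.inr h2⟩
  · rintro (h | ⟨h1, h | h⟩)
    · exact Or.inr (Or.inl h)
    · exact Or.inl ⟨h1.symm, h⟩
    · exact Or.inr (Or.inr ⟨h1, h⟩)

lemma cycleAdj_iff {n : ℕ} {a b : Fin (n+4)} :
    (cycleGraph (n+4)).Adj a b ↔ b = a + 1 ∨ a = b + 1 := by
  rw [cycleGraph_adj']
  have h1 : ∀ u v : Fin (n+4), (u - v).val = 1 ↔ u = v + 1 := by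
    intro u v
    rw [show (1:ℕ) = (1 : Fin (n+4)).val from (Fin.val_one _).symm, ← Fin.ext_iff,
      sub_eq_iff_eq_add']
  rw [h1, h1]
  tauto

lemma two_ne_zero_fin {n : ℕ} : (2 : Fin (n+4)) ≠ 0 := by
  intro h
  have := congrArg Fin.val h
  rw [Fin.val_two] at this
  simp at this


lemma legal_snoc {V : Type*} {G : SimpleGraph V} {l : List V} (h : IsLegalSeq G l) (v : V)
    (hv : ∀ u ∈ l, v ∉ closedNbhd G u) : IsLegalSeq G (l ++ [v]) := by
  have hvl : v ∉ l := fun hmem => hv v hmem (mem_closedNbhd'.2 (Or.inl rfl))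
  constructor
  · rw [List.nodup_append]
    exact ⟨h.1, List.nodup_singleton v, by intro a ha b hb hab; rw [List.mem_singleton] at hb; exact hvl (hb ▸ hab ▸ ha)⟩
  · intro i
    rcases lt_or_ge (i : ℕ) l.length with hi | hi
    · obtain ⟨u, hu1, hu2⟩ := h.2 ⟨i, hi⟩
      refine ⟨u, ?_, ?_⟩
      · rwa [List.get_append_left _ _ hi]
      · intro j hj
        have hjl : (j : ℕ) < l.length := lt_of_lt_of_le (lt_of_lt_of_le hj (Nat.le_of_lt_succ (by
          simpa using i.2))) (by simpa using hi.le)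
        rw [List.get_append_left _ _ hjl]
        exact hu2 ⟨j, hjl⟩ hj
    · have hieq : (i:ℕ) = l.length := by
        have := i.2; simp at this; omega
      refine ⟨v, ?_, ?_⟩
      · have : (l ++ [v]).get i = v := by
          simp [List.getElem_append, hieq]
        rw [this]; exact mem_closedNbhd'.2 (Or.inl rfl)
      · intro j hj
        have hjl : (j : ℕ) < l.length := by omega
        rw [List.get_append_left _ _ hjl]
        exact hv _ (List.get_mem l ⟨j, hjl⟩)

open Fin.NatCast Fin.CommRing

section Upper

attribute [local instance] Classical.propDecidable

variable {k' : ℕ} {W : Type*} {H : SimpleGraph W} {n : ℕ}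

/-- context structure for the upper bound argument -/
structure UB (k' : ℕ) {W : Type*} (H : SimpleGraph W) (n : ℕ) where
  x : Fin n → Fin (k'+4) × W
  u : Fin n → Fin (k'+4) × W
  inj : Function.Injective x
  hu1 : ∀ i, (u i) ∈ closedNbhd (lexProd (cycleGraph (k'+4)) H) (x i)
  hu2 : ∀ i j : Fin n, j < i → (u i) ∉ closedNbhd (lexProd (cycleGraph (k'+4)) H) (x j)

namespace UB

variable (D : UB k' H n)

def col (i : Fin n) : Fin (k'+4) := (D.x i).1
def Selfish (i : Fin n) : Prop := (D.u i).1 = D.col i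
def M : Finset (Fin (k'+4)) := Finset.univ.image D.col
def IsI (d : Fin (k'+4)) : Prop := ∃ i, D.Selfish i ∧ D.col i = d
def IsR (d : Fin (k'+4)) : Prop := ∃ i, ¬ D.Selfish i ∧ (D.u i).1 = d
noncomputable def fst (d : Fin (k'+4)) : ℕ := sInf {t | ∃ h : t < n, D.col ⟨t, h⟩ = d}

lemma mem_M_iff {d : Fin (k'+4)} : d ∈ D.M ↔ ∃ i, D.col i = d := by
  simp [M]

lemma memN_iff {i j : Fin n} :
    D.u i ∈ closedNbhd (lexProd (cycleGraph (k'+4)) H) (D.x j) ↔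
      (cycleGraph (k'+4)).Adj (D.col j) (D.u i).1 ∨
        ((D.col j) = (D.u i).1 ∧ (D.u i).2 ∈ closedNbhd H (D.x j).2) := by
  have h1 : D.u i = ((D.u i).1, (D.u i).2) := rfl
  have h2 : D.x j = ((D.x j).1, (D.x j).2) := rfl
  rw [h1, h2]
  exact mem_closedNbhd_lexProd

lemma K1 {i : Fin n} (h : D.Selfish i) : (D.u i).2 ∈ closedNbhd H (D.x i).2 := by
  have := D.hu1 i
  rw [memN_iff] at this
  rcases this with h1 | h1
  · rw [h] at h1; exact absurd h1 (SimpleGraph.irrefl _)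
  · exact h1.2

lemma K2 {i : Fin n} (h : ¬ D.Selfish i) : (cycleGraph (k'+4)).Adj (D.col i) (D.u i).1 := by
  have := D.hu1 i
  rw [memN_iff] at this
  rcases this with h1 | h1
  · exact h1
  · exact absurd h1.1.symm h

lemma K3 {i j : Fin n} (hij : j < i) : ¬ (cycleGraph (k'+4)).Adj (D.col j) (D.u i).1 := by
  intro hadj
  exact D.hu2 i j hij (D.memN_iff.2 (Or.inl hadj))

lemma K4 {i j : Fin n} (hij : j < i) (hcol : D.col j = (D.u i).1) :
    (D.u i).2 ∉ closedNbhd H (D.x j).2 := by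
  intro hmem
  exact D.hu2 i j hij (D.memN_iff.2 (Or.inr ⟨hcol, hmem⟩))

lemma K5 {i j : Fin n} (hij : j < i) (hcol : D.col j = D.col i) : D.Selfish i := by
  by_contra h
  exact D.K3 hij (hcol ▸ D.K2 h)

lemma T1 {i j : Fin n} (hs : D.Selfish i) (hadj : (cycleGraph (k'+4)).Adj (D.col j) (D.col i)) :
    i < j := by
  rcases lt_trichotomy j i with h | h | h
  · exact absurd (hs ▸ hadj) (D.K3 h)
  · rw [h] at hadj; exact absurd hadj (SimpleGraph.irrefl _)
  · exact h

lemma T2 {i j : Fin n} (hs : ¬ D.Selfish i)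
    (hadj : (cycleGraph (k'+4)).Adj (D.col j) ((D.u i).1)) (hne : D.col j ≠ D.col i) :
    i < j := by
  rcases lt_trichotomy j i with h | h | h
  · exact absurd hadj (D.K3 h)
  · rw [h] at hne; exact absurd rfl hne
  · exact h

lemma fst_spec {d : Fin (k'+4)} (hd : d ∈ D.M) :
    ∃ h : D.fst d < n, D.col ⟨D.fst d, h⟩ = d := by
  obtain ⟨i, hi⟩ := D.mem_M_iff.1 hd
  have hne : {t | ∃ h : t < n, D.col ⟨t, h⟩ = d}.Nonempty := ⟨i.val, i.2, by simpa using hi⟩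
  exact Nat.sInf_mem hne

lemma fst_le {d : Fin (k'+4)} {i : Fin n} (hi : D.col i = d) : D.fst d ≤ i.val :=
  Nat.sInf_le ⟨i.2, by simpa using hi⟩

/-- T1 at the level of first indices -/
lemma fst_lt_I {d e : Fin (k'+4)} (hd : D.IsI d) (he : e ∈ D.M)
    (hadj : (cycleGraph (k'+4)).Adj e d) : D.fst d < D.fst e := by
  obtain ⟨i, hsi, hci⟩ := hd
  obtain ⟨hlt, hce⟩ := D.fst_spec he
  have h1 : i < (⟨D.fst e, hlt⟩ : Fin n) := D.T1 hsi (by rw [hce, hci]; exact hadj)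
  have h2 : D.fst d ≤ i.val := D.fst_le hci
  exact lt_of_le_of_lt h2 h1

/-- donor column: its first move is generous -/
lemma donor_step {d : Fin (k'+4)} (hd : d ∈ D.M) (hdI : ¬ D.IsI d) :
    ∃ r, (cycleGraph (k'+4)).Adj d r ∧ D.IsR r ∧
      ∀ e, e ∈ D.M → (cycleGraph (k'+4)).Adj e r → e ≠ d → D.fst d < D.fst e := by
  obtain ⟨hlt, hcd⟩ := D.fst_spec hd
  set i0 : Fin n := ⟨D.fst d, hlt⟩ with hi0
  have hns : ¬ D.Selfish i0 := fun hs => hdI ⟨i0, hs, hcd⟩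
  refine ⟨(D.u i0).1, by rw [← hcd]; exact D.K2 hns, ⟨i0, hns, rfl⟩, ?_⟩
  intro e he hadj hne
  obtain ⟨hlt2, hce⟩ := D.fst_spec he
  have h1 : i0 < (⟨D.fst e, hlt2⟩ : Fin n) := by
    refine D.T2 hns (by rw [hce]; exact hadj) ?_
    rw [hce, hcd]; exact hne
  exact h1


lemma cast_succ {t : ℕ} : ((t+1 : ℕ) : Fin (k'+4)) = ((t:ℕ) : Fin (k'+4)) + 1 := by
  push_cast; ring

lemma adj_succ {a : Fin (k'+4)} : (cycleGraph (k'+4)).Adj (a+1) a :=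
  cycleAdj_iff.2 (Or.inr rfl)

lemma adj_succ' {a : Fin (k'+4)} : (cycleGraph (k'+4)).Adj a (a+1) :=
  cycleAdj_iff.2 (Or.inl rfl)

lemma segment_false {d d' : Fin (k'+4)} {L : ℕ} (hL : 1 ≤ L) (hLK : L ≤ k'+2)
    (hd : D.IsI d) (hdR : ¬ D.IsR d) (hd' : D.IsI d') (hd'R : ¬ D.IsR d')
    (hdd' : d' = d + (L : Fin (k'+4)))
    (hseg : ∀ t, t ≤ L → (d + (t : Fin (k'+4))) ∈ D.M) : False := by
  obtain ⟨j, hjmem, hjmax⟩ := Finset.exists_max_image (Finset.range (L+1))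
    (fun t => D.fst (d + (t : Fin (k'+4)))) ⟨0, by simp⟩
  rw [Finset.mem_range] at hjmem
  have hjL : j ≤ L := by omega
  have hmax : ∀ t, t ≤ L → D.fst (d + (t : Fin (k'+4))) ≤ D.fst (d + (j : Fin (k'+4))) := by
    intro t ht
    exact hjmax t (Finset.mem_range.2 (by omega))
  rcases Nat.eq_zero_or_pos j with hj0 | hjpos
  · -- j = 0 : the left endpoint is max, contradiction with T1
    have h1 : D.fst d < D.fst (d + ((1:ℕ) : Fin (k'+4))) := by
      have := D.fst_lt_I hd (hseg 1 hL) (by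
        rw [Nat.cast_one]
        exact adj_succ)
      rwa [Nat.cast_one]
    have h2 := hmax 1 hL
    rw [hj0] at h2
    simp only [Nat.cast_zero, add_zero] at h2
    omega
  rcases eq_or_lt_of_le hjL with hjL' | hjlt
  · -- j = L : right endpoint is max
    have hL1 : L - 1 ≤ L := by omega
    have hcast : ((L:ℕ) : Fin (k'+4)) = ((L-1 : ℕ) : Fin (k'+4)) + 1 := by
      rw [← cast_succ]; congr 1; omega
    have hadj : (cycleGraph (k'+4)).Adj (d + ((L-1:ℕ) : Fin (k'+4))) d' := by
      rw [hdd', hcast, ← add_assoc]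
      exact adj_succ'
    have h1 : D.fst d' < D.fst (d + ((L-1:ℕ) : Fin (k'+4))) :=
      D.fst_lt_I hd' (hseg (L-1) hL1) hadj
    have h2 := hmax (L-1) hL1
    rw [hjL', ← hdd'] at h2
    omega
  -- interior
  set xc : Fin (k'+4) := d + (j : Fin (k'+4)) with hxc
  have hxM : xc ∈ D.M := hseg j hjL
  by_cases hxI : D.IsI xc
  · have h1 : D.fst xc < D.fst (d + ((j+1:ℕ) : Fin (k'+4))) := by
      refine D.fst_lt_I hxI (hseg (j+1) (by omega)) ?_
      rw [cast_succ, ← add_assoc, ← hxc]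
      exact adj_succ
    have h2 := hmax (j+1) (by omega)
    omega
  · obtain ⟨r, hadj, hrR, hlt⟩ := D.donor_step hxM hxI
    rcases cycleAdj_iff.1 hadj with hr | hr
    · -- r = xc + 1
      rcases eq_or_lt_of_le (show j + 1 ≤ L by omega) with hjl | hjl
      · -- r = d', contradiction with d' not receiver
        apply hd'R
        have : r = d' := by
          rw [hr, hdd', ← hjl, cast_succ, ← add_assoc]
        rwa [this] at hrR
      · -- far side x+2
        have he : (d + ((j+2:ℕ) : Fin (k'+4))) ∈ D.M := hseg (j+2) (by omega)
        have hadj2 : (cycleGraph (k'+4)).Adj (d + ((j+2:ℕ) : Fin (k'+4))) r := by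
          rw [hr, show ((j+2:ℕ) : Fin (k'+4)) = ((j+1:ℕ) : Fin (k'+4)) + 1 by
            rw [← cast_succ], cast_succ (t := j), ← add_assoc, ← add_assoc, ← hxc]
          exact adj_succ
        have hne : d + ((j+2:ℕ) : Fin (k'+4)) ≠ xc := by
          rw [hxc]
          intro hcontra
          have := add_left_cancel hcontra
          have h2 := congrArg Fin.val this
          rw [Fin.val_cast_of_lt (by omega), Fin.val_cast_of_lt (by omega)] at h2
          omega
        have := hlt _ he hadj2 hne
        have h2 := hmax (j+2) (by omega)
        omega
    · -- xc = r + 1, i.e. r = xc - 1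
      have hreq : r = d + ((j-1 : ℕ) : Fin (k'+4)) := by
        have : xc = (d + ((j-1:ℕ) : Fin (k'+4))) + 1 := by
          rw [hxc, add_assoc, ← cast_succ, show j - 1 + 1 = j by omega]
        rw [this] at hr
        exact (add_right_cancel hr).symm
      rcases eq_or_lt_of_le (show 1 ≤ j from hjpos) with hj1 | hj1
      · -- j = 1 : r = d, contradiction with d not receiver
        apply hdR
        have : r = d := by
          rw [hreq, show j - 1 = 0 by omega]
          simp
        rwa [this] at hrR
      · -- far side x - 2
        have he : (d + ((j-2:ℕ) : Fin (k'+4))) ∈ D.M := hseg (j-2) (by omega)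
        have hadj2 : (cycleGraph (k'+4)).Adj (d + ((j-2:ℕ) : Fin (k'+4))) r := by
          rw [hreq, show ((j-1:ℕ) : Fin (k'+4)) = ((j-2:ℕ) : Fin (k'+4)) + 1 by
            rw [← cast_succ]; congr 1; omega, ← add_assoc]
          exact adj_succ'
        have hne : d + ((j-2:ℕ) : Fin (k'+4)) ≠ xc := by
          rw [hxc]
          intro hcontra
          have := add_left_cancel hcontra
          have h2 := congrArg Fin.val this
          rw [Fin.val_cast_of_lt (by omega), Fin.val_cast_of_lt (by omega)] at h2
          omega
        have := hlt _ he hadj2 hne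
        have h2 := hmax (j-2) (by omega)
        omega

lemma not_all_played : D.M ≠ Finset.univ := by
  intro hM
  have hall : ∀ e : Fin (k'+4), e ∈ D.M := fun e => hM ▸ Finset.mem_univ e
  obtain ⟨xs, _, hmax⟩ := Finset.exists_max_image (Finset.univ : Finset (Fin (k'+4)))
    (fun e => D.fst e) ⟨0, Finset.mem_univ 0⟩
  have hmax' : ∀ e, D.fst e ≤ D.fst xs := fun e => hmax e (Finset.mem_univ e)
  by_cases hxI : D.IsI xs
  · have := D.fst_lt_I hxI (hall (xs+1)) adj_succ
    have h2 := hmax' (xs+1)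
    omega
  · obtain ⟨r, hadj, _, hlt⟩ := D.donor_step (hall xs) hxI
    rcases cycleAdj_iff.1 hadj with hr | hr
    · have hne : r + 1 ≠ xs := by
        intro hcontra
        have h2 : r = r + 2 := by
          linear_combination hr - hcontra
        exact two_ne_zero_fin (left_eq_add.1 h2)
      have := hlt (r+1) (hall _) adj_succ hne
      have h2 := hmax' (r+1)
      omega
    · have hne : r - 1 ≠ xs := by
        intro hcontra
        have h : r - 1 = r + 1 := hcontra.trans hr
        have h2 : r = r + 2 := by
          linear_combination h
        exact two_ne_zero_fin (left_eq_add.1 h2)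
      have hadj2 : (cycleGraph (k'+4)).Adj (r-1) r := by
        have h : (cycleGraph (k'+4)).Adj (r-1) (r-1+1) := adj_succ'
        rwa [sub_add_cancel] at h
      have := hlt (r-1) (hall _) hadj2 hne
      have h2 := hmax' (r-1)
      omega


def Jlist (d : Fin (k'+4)) : List (Fin n) :=
  (List.finRange n).filter (fun i => decide (D.col i = d))

lemma mem_Jlist {d : Fin (k'+4)} {i : Fin n} : i ∈ D.Jlist d ↔ D.col i = d := by
  simp [Jlist]

lemma Jlist_nodup (d : Fin (k'+4)) : (D.Jlist d).Nodup :=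
  (List.nodup_finRange n).filter _

lemma Jlist_sorted (d : Fin (k'+4)) : (D.Jlist d).Pairwise (· < ·) :=
  (List.pairwise_lt_finRange n).sublist List.filter_sublist

lemma card_filter_eq_Jlist_length (d : Fin (k'+4)) :
    (Finset.univ.filter (fun i => D.col i = d)).card = (D.Jlist d).length := by
  have he : (Finset.univ.filter (fun i => D.col i = d)) = (D.Jlist d).toFinset := by
    ext i
    simp [mem_Jlist]
  rw [he, List.toFinset_card_of_nodup (D.Jlist_nodup d)]

def sigma (d : Fin (k'+4)) : List W := (D.Jlist d).map (fun i => (D.x i).2)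

lemma sigma_nodup (d : Fin (k'+4)) : (D.sigma d).Nodup := by
  refine (D.Jlist_nodup d).map_on ?_
  intro i hi j hj hxy
  apply D.inj
  have h1 : D.col i = d := D.mem_Jlist.1 hi
  have h2 : D.col j = d := D.mem_Jlist.1 hj
  have : D.col i = D.col j := by rw [h1, h2]
  exact Prod.ext this hxy

lemma sigma_get {d : Fin (k'+4)} {p : ℕ} (hp : p < (D.sigma d).length) :
    ∃ hp' : p < (D.Jlist d).length,
      (D.sigma d).get ⟨p, hp⟩ = (D.x ((D.Jlist d).get ⟨p, hp'⟩)).2 := by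
  have hlen : (D.sigma d).length = (D.Jlist d).length := List.length_map _
  exact ⟨hlen ▸ hp, by simp [sigma]⟩

lemma sigma_legal (d : Fin (k'+4)) : IsLegalSeq H (D.sigma d) := by
  constructor
  · exact D.sigma_nodup d
  · intro p
    obtain ⟨hp', hgp⟩ := D.sigma_get p.2
    set ip : Fin n := (D.Jlist d).get ⟨p.val, hp'⟩ with hip
    have hcolp : D.col ip = d := D.mem_Jlist.1 (List.get_mem _ _)
    -- earlier entries of sigma come from smaller original indices in the same column
    have hsmaller : ∀ q : Fin (D.sigma d).length, (q:ℕ) < (p:ℕ) →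
        ∃ hq' : (q:ℕ) < (D.Jlist d).length,
          ((D.Jlist d).get ⟨q.val, hq'⟩) < ip ∧ D.col ((D.Jlist d).get ⟨q.val, hq'⟩) = d ∧
          (D.sigma d).get q = (D.x ((D.Jlist d).get ⟨q.val, hq'⟩)).2 := by
      intro q hq
      obtain ⟨hq', hgq⟩ := D.sigma_get q.2
      refine ⟨hq', ?_, D.mem_Jlist.1 (List.get_mem _ _), hgq⟩
      exact (List.pairwise_iff_get.1 (D.Jlist_sorted d)) ⟨q.val, hq'⟩ ⟨p.val, hp'⟩ hq
    by_cases hp0 : (p : ℕ) = 0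
    · refine ⟨(D.x ip).2, ?_, ?_⟩
      · rw [hgp]; exact mem_closedNbhd'.2 (Or.inl rfl)
      · intro q hq
        omega
    · -- p > 0, so ip has an earlier same-column index, hence is selfish
      have h0lt : 0 < (D.Jlist d).length := by omega
      have hi0 : (D.Jlist d).get ⟨0, h0lt⟩ < ip :=
        (List.pairwise_iff_get.1 (D.Jlist_sorted d)) ⟨0, h0lt⟩ ⟨p.val, hp'⟩ (Fin.mk_lt_mk.2 (by omega))
      have hcol0 : D.col ((D.Jlist d).get ⟨0, h0lt⟩) = d := D.mem_Jlist.1 (List.get_mem _ _)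
      have hself : D.Selfish ip := D.K5 hi0 (by rw [hcol0, hcolp])
      refine ⟨(D.u ip).2, ?_, ?_⟩
      · rw [hgp]; exact D.K1 hself
      · intro q hq
        obtain ⟨hq', hlt, hcolq, hgq⟩ := hsmaller q hq
        rw [hgq]
        refine D.K4 hlt ?_
        rw [hcolq, hself, hcolp]


/-- if `d` is a selfish column receiving a donation, then all moves in column `d`
precede the donating move -/
lemma moves_before_donation {d : Fin (k'+4)} {istar : Fin n}
    (hI : D.IsI d) (hns : ¬ D.Selfish istar) (hrec : (D.u istar).1 = d) :
    ∀ i : Fin n, D.col i = d → i < istar := by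
  obtain ⟨i0, hs0, hc0⟩ := hI
  have hadj : (cycleGraph (k'+4)).Adj (D.col istar) d := hrec ▸ D.K2 hns
  have hne : D.col istar ≠ d := hadj.ne
  have hi0 : i0 < istar := by
    rcases lt_trichotomy i0 istar with h | h | h
    · exact h
    · exact absurd (h ▸ hc0) hne
    · exact absurd (by rw [hs0, hc0]; exact hadj : (cycleGraph (k'+4)).Adj (D.col istar) ((D.u i0).1)) (D.K3 h)
  intro i hci
  rcases lt_trichotomy i istar with h | h | h
  · exact h
  · exact absurd (h ▸ hci) hne
  · -- i after istar: i is selfish (i0 < istar < i, same column), contradiction with K3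
    exfalso
    have hsel : D.Selfish i := D.K5 (lt_trans hi0 h) (by rw [hc0, hci])
    exact D.K3 h (by rw [hsel, hci]; exact hadj)

lemma cap2 {d : Fin (k'+4)} {mB : ℕ} (hmB : ∀ τ : List W, IsLegalSeq H τ → τ.length ≤ mB)
    (hI : D.IsI d) (hR : D.IsR d) :
    (Finset.univ.filter (fun i => D.col i = d)).card + 1 ≤ mB := by
  obtain ⟨istar, hns, hrec⟩ := hR
  have hb := D.moves_before_donation hI hns hrec
  have hlegal : IsLegalSeq H (D.sigma d ++ [(D.u istar).2]) := by
    refine legal_snoc (D.sigma_legal d) _ ?_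
    intro a ha
    rw [sigma, List.mem_map] at ha
    obtain ⟨i, hiJ, hia⟩ := ha
    have hci : D.col i = d := D.mem_Jlist.1 hiJ
    rw [← hia]
    exact D.K4 (hb i hci) (by rw [hci, hrec])
  have := hmB _ hlegal
  rw [List.length_append, List.length_singleton, sigma, List.length_map,
    ← card_filter_eq_Jlist_length] at this
  exact this

lemma cap1 {d : Fin (k'+4)} {mB : ℕ} (hmB : ∀ τ : List W, IsLegalSeq H τ → τ.length ≤ mB) :
    (Finset.univ.filter (fun i => D.col i = d)).card ≤ mB := by
  have := hmB _ (D.sigma_legal d)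
  rw [sigma, List.length_map, ← card_filter_eq_Jlist_length] at this
  exact this

lemma cap_nonI {d : Fin (k'+4)} (hdI : ¬ D.IsI d) :
    (Finset.univ.filter (fun i => D.col i = d)).card ≤ 1 := by
  rw [Finset.card_le_one]
  intro i hi j hj
  simp only [Finset.mem_filter, Finset.mem_univ, true_and] at hi hj
  by_contra hne
  rcases lt_or_gt_of_ne hne with h | h
  · exact hdI ⟨j, D.K5 h (by rw [hi, hj]), hj⟩
  · exact hdI ⟨i, D.K5 h (by rw [hi, hj]), hi⟩

lemma I_not_adj {d e : Fin (k'+4)} (hd : D.IsI d) (he : D.IsI e)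
    (hadj : (cycleGraph (k'+4)).Adj d e) : False := by
  obtain ⟨i, hsi, hci⟩ := hd
  obtain ⟨j, hsj, hcj⟩ := he
  have h1 : i < j := D.T1 hsi (by rw [hci, hcj]; exact hadj.symm)
  have h2 : j < i := D.T1 hsj (by rw [hci, hcj]; exact hadj)
  omega


lemma indep_bound : 2 * (D.M.filter (fun d => D.IsI d)).card ≤ k'+4 := by
  set Iset := D.M.filter (fun d => D.IsI d) with hIset
  have hinj : Function.Injective (fun a : Fin (k'+4) => a + 1) := add_left_injective 1
  have hdisj : Disjoint Iset (Iset.image (fun a => a + 1)) := by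
    rw [Finset.disjoint_right]
    intro z hz1 hz2
    obtain ⟨dd, hd, hdz⟩ := Finset.mem_image.1 hz1
    have h1 : D.IsI dd := (Finset.mem_filter.1 hd).2
    have h2 : D.IsI z := (Finset.mem_filter.1 hz2).2
    exact D.I_not_adj h1 h2 (hdz ▸ adj_succ')
  have hcard := Finset.card_union_of_disjoint hdisj.symm
  have hle : (Iset.image (fun a => a + 1) ∪ Iset).card ≤ k'+4 := by
    have := Finset.card_le_univ (Iset.image (fun a => a + 1) ∪ Iset)
    simpa using this
  rw [hcard, Finset.card_image_of_injective _ hinj] at hle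
  omega

lemma psi_bound : (D.M.filter (fun d => D.IsI d ∧ ¬ D.IsR d)).card + D.M.card ≤ k'+4 := by
  set B := D.M.filter (fun d => D.IsI d ∧ ¬ D.IsR d) with hB
  obtain ⟨z, hz⟩ : ∃ z, z ∉ D.M := by
    by_contra hcon
    push_neg at hcon
    exact D.not_all_played (Finset.eq_univ_iff_forall.2 hcon)
  have hex : ∀ d, d ∈ D.M → ∃ j : ℕ, 0 < j ∧ (d + (j : Fin (k'+4))) ∉ D.M := by
    intro d hd
    refine ⟨(z - d).val, ?_, ?_⟩
    · have hzd : z ≠ d := fun h => hz (h ▸ hd)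
      have : z - d ≠ 0 := sub_ne_zero_of_ne hzd
      have hv : (z - d).val ≠ 0 := fun h => this (Fin.ext h)
      omega
    · rw [Fin.cast_val_eq_self, add_sub_cancel]
      exact hz
  have hfind_le : ∀ d (hd : ∃ j : ℕ, 0 < j ∧ (d + (j : Fin (k'+4))) ∉ D.M),
      d ∈ D.M → Nat.find hd ≤ k'+3 := by
    intro d hd hdM
    have h1 : Nat.find hd ≤ (z - d).val := by
      refine Nat.find_le ⟨?_, ?_⟩
      · have hzd : z ≠ d := fun h => hz (h ▸ hdM)
        have : z - d ≠ 0 := sub_ne_zero_of_ne hzd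
        have hv : (z - d).val ≠ 0 := fun h => this (Fin.ext h)
        omega
      · rw [Fin.cast_val_eq_self, add_sub_cancel]
        exact hz
    have h2 := (z - d).isLt
    omega
  classical
  set f : Fin (k'+4) → Fin (k'+4) := fun d =>
    if h : ∃ j : ℕ, 0 < j ∧ (d + (j : Fin (k'+4))) ∉ D.M then d + ((Nat.find h : ℕ) : Fin (k'+4))
    else d with hf
  have hBM : ∀ d ∈ B, d ∈ D.M := fun d hd => (Finset.mem_filter.1 hd).1
  have hmaps : ∀ d ∈ B, f d ∈ Finset.univ \ D.M := by
    intro d hd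
    have hdM := hBM d hd
    rw [hf]
    simp only [dif_pos (hex d hdM)]
    rw [Finset.mem_sdiff]
    exact ⟨Finset.mem_univ _, (Nat.find_spec (hex d hdM)).2⟩
  have key : ∀ a b : Fin (k'+4), a ∈ B → b ∈ B →
      ∀ (ha : ∃ j : ℕ, 0 < j ∧ (a + (j : Fin (k'+4))) ∉ D.M)
        (hb : ∃ j : ℕ, 0 < j ∧ (b + (j : Fin (k'+4))) ∉ D.M),
      Nat.find hb < Nat.find ha →
      a + ((Nat.find ha : ℕ) : Fin (k'+4)) = b + ((Nat.find hb : ℕ) : Fin (k'+4)) → False := by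
    intro a b haB hbB ha hb hlt heq
    have haM := hBM a haB
    have hbM := hBM b hbB
    have hja := hfind_le a ha haM
    have hjbpos := (Nat.find_spec hb).1
    set ja := Nat.find ha
    set jb := Nat.find hb
    set L := ja - jb with hL
    have hL1 : 1 ≤ L := by omega
    have hLK : L ≤ k'+2 := by omega
    have hba : b = a + ((L : ℕ) : Fin (k'+4)) := by
      have hcast : ((ja : ℕ) : Fin (k'+4)) = ((L:ℕ) : Fin (k'+4)) + ((jb:ℕ) : Fin (k'+4)) := by
        rw [← Nat.cast_add]
        congr 1
        omega
      rw [hcast, ← add_assoc] at heq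
      exact (add_right_cancel heq).symm
    have haIsI : D.IsI a ∧ ¬ D.IsR a := (Finset.mem_filter.1 haB).2
    have hbIsI : D.IsI b ∧ ¬ D.IsR b := (Finset.mem_filter.1 hbB).2
    refine D.segment_false hL1 hLK haIsI.1 haIsI.2 hbIsI.1 hbIsI.2 hba ?_
    intro t ht
    rcases Nat.eq_zero_or_pos t with ht0 | htpos
    · rw [ht0]; simpa using haM
    · have htja : t < ja := by omega
      have := Nat.find_min ha htja
      push_neg at this
      exact this htpos
  have hinjOn : Set.InjOn f B := by
    intro a haB b hbB heq
    by_contra hne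
    have hfa : f a = a + ((Nat.find (hex a (hBM a haB)) : ℕ) : Fin (k'+4)) := by
      rw [hf]; simp only [dif_pos (hex a (hBM a haB))]
    have hfb : f b = b + ((Nat.find (hex b (hBM b hbB)) : ℕ) : Fin (k'+4)) := by
      rw [hf]; simp only [dif_pos (hex b (hBM b hbB))]
    rw [hfa, hfb] at heq
    rcases lt_trichotomy (Nat.find (hex b (hBM b hbB))) (Nat.find (hex a (hBM a haB))) with h | h | h
    · exact key a b haB hbB _ _ h heq
    · apply hne
      rw [h] at heq
      exact add_right_cancel heq
    · exact key b a hbB haB _ _ h heq.symm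
  have hcle := Finset.card_le_card_of_injOn f hmaps hinjOn
  have hsd : (Finset.univ \ D.M).card = (k'+4) - D.M.card := by
    rw [Finset.card_sdiff_of_subset (Finset.subset_univ _)]
    simp
  have hMle : D.M.card ≤ k'+4 := by
    have := Finset.card_le_univ D.M
    simpa using this
  omega

theorem main (E : UB k' H n) {mp : ℕ}
    (hmB : ∀ τ : List W, IsLegalSeq H τ → τ.length ≤ mp + 2) :
    n ≤ mp * ((k'+4)/2) + (k'+4) := by
  classical
  set g : Fin (k'+4) → ℕ := fun d => (Finset.univ.filter (fun i => E.col i = d)).card with hg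
  have hfib : n = ∑ d ∈ E.M, g d := by
    have h0 := Finset.card_eq_sum_card_fiberwise
      (f := E.col) (s := Finset.univ) (t := E.M)
      (fun i _ => E.mem_M_iff.2 ⟨i, rfl⟩)
    simpa [hg] using h0
  have hsplit1 : ∑ d ∈ E.M, g d =
      ∑ d ∈ E.M.filter (fun d => E.IsI d), g d +
      ∑ d ∈ E.M.filter (fun d => ¬ E.IsI d), g d :=
    (Finset.sum_filter_add_sum_filter_not E.M _ g).symm
  have hsplit2 : ∑ d ∈ E.M.filter (fun d => E.IsI d), g d =
      ∑ d ∈ (E.M.filter (fun d => E.IsI d)).filter (fun d => E.IsR d), g d +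
      ∑ d ∈ (E.M.filter (fun d => E.IsI d)).filter (fun d => ¬ E.IsR d), g d :=
    (Finset.sum_filter_add_sum_filter_not _ _ g).symm
  set A := (E.M.filter (fun d => E.IsI d)).filter (fun d => E.IsR d) with hA
  set Bs := (E.M.filter (fun d => E.IsI d)).filter (fun d => ¬ E.IsR d) with hBs
  set P := E.M.filter (fun d => ¬ E.IsI d) with hP
  have hSa : ∑ d ∈ A, g d ≤ A.card * (mp + 1) := by
    rw [← smul_eq_mul, ← Finset.sum_const]
    refine Finset.sum_le_sum ?_
    intro d hd
    rw [hA] at hd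
    simp only [Finset.mem_filter] at hd
    have h2 : g d + 1 ≤ mp + 2 := E.cap2 hmB hd.1.2 hd.2
    omega
  have hSb : ∑ d ∈ Bs, g d ≤ Bs.card * (mp + 2) := by
    rw [← smul_eq_mul, ← Finset.sum_const]
    refine Finset.sum_le_sum ?_
    intro d hd
    exact (E.cap1 hmB : g d ≤ mp + 2)
  have hSp : ∑ d ∈ P, g d ≤ P.card := by
    have : ∑ d ∈ P, g d ≤ ∑ _d ∈ P, 1 := by
      refine Finset.sum_le_sum ?_
      intro d hd
      rw [hP] at hd
      simp only [Finset.mem_filter] at hd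
      exact (E.cap_nonI hd.2 : g d ≤ 1)
    simpa using this
  have hIcard : (E.M.filter (fun d => E.IsI d)).card = A.card + Bs.card := by
    rw [hA, hBs]
    exact (Finset.card_filter_add_card_filter_not _).symm
  have hMcard : E.M.card = (A.card + Bs.card) + P.card := by
    rw [← hIcard, hP]
    exact (Finset.card_filter_add_card_filter_not _).symm
  have hindep := E.indep_bound
  rw [hIcard] at hindep
  have hpsi := E.psi_bound
  have hBsEq : (E.M.filter (fun d => E.IsI d ∧ ¬ E.IsR d)) = Bs := by
    rw [hBs, Finset.filter_filter]
  rw [hBsEq, hMcard] at hpsi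
  -- final arithmetic
  have hn : n ≤ A.card * (mp + 1) + Bs.card * (mp + 2) + P.card := by
    rw [hfib, hsplit1, hsplit2]
    exact add_le_add (add_le_add hSa hSb) hSp
  have hab : A.card + Bs.card ≤ (k'+4)/2 := by omega
  have hmul : mp * (A.card + Bs.card) ≤ mp * ((k'+4)/2) :=
    Nat.mul_le_mul_left mp hab
  have halg : A.card * (mp + 1) + Bs.card * (mp + 2) + P.card =
      mp * (A.card + Bs.card) + (A.card + 2 * Bs.card + P.card) := by ring
  have hsum : A.card + 2 * Bs.card + P.card ≤ k'+4 := by omega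
  calc n ≤ A.card * (mp + 1) + Bs.card * (mp + 2) + P.card := hn
    _ = mp * (A.card + Bs.card) + (A.card + 2 * Bs.card + P.card) := halg
    _ ≤ mp * ((k'+4)/2) + (k'+4) := add_le_add hmul hsum

end UB

theorem upper_bound {k' : ℕ} {W : Type*} {H : SimpleGraph W} {mp : ℕ}
    (hmB : ∀ τ : List W, IsLegalSeq H τ → τ.length ≤ mp + 2)
    (l : List (Fin (k'+4) × W)) (hl : IsLegalSeq (lexProd (cycleGraph (k'+4)) H) l) :
    l.length ≤ mp * ((k'+4)/2) + (k'+4) := by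
  obtain ⟨hnd, hw⟩ := hl
  choose u hu1 hu2 using hw
  have E : UB k' H l.length :=
    { x := l.get
      u := u
      inj := fun i j hij => List.nodup_iff_injective_get.1 hnd hij
      hu1 := hu1
      hu2 := fun i j hij => hu2 i j hij }
  exact E.main hmB

end Upper

section Blocks
variable {V W : Type*} {G : SimpleGraph V} {H : SimpleGraph W}

def blocksList (cols : List V) (σ : List W) : List (V × W) :=
  cols.flatMap (fun c => σ.map (fun w => (c, w)))

lemma mem_blocksList {cols : List V} {σ : List W} {a : V × W} :
    a ∈ blocksList cols σ ↔ a.1 ∈ cols ∧ a.2 ∈ σ := by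
  rcases a with ⟨c, w⟩
  simp only [blocksList, List.mem_flatMap, List.mem_map, Prod.mk.injEq]
  constructor
  · rintro ⟨c', hc', w', hw', h1, h2⟩
    subst h1; subst h2; exact ⟨hc', hw'⟩
  · rintro ⟨hc, hw⟩
    exact ⟨c, hc, w, hw, rfl, rfl⟩

lemma blocksList_length (cols : List V) (σ : List W) :
    (blocksList cols σ).length = cols.length * σ.length := by
  induction cols with
  | nil => simp [blocksList]
  | cons c cs ih =>
    simp only [blocksList, List.flatMap_cons, List.length_append, List.length_map] at ih ⊢
    rw [ih, List.length_cons]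
    ring

lemma blocksList_nodup {cols : List V} {σ : List W} (hc : cols.Nodup) (hσ : σ.Nodup) :
    (blocksList cols σ).Nodup := by
  rw [blocksList, List.nodup_flatMap]
  constructor
  · intro c _
    exact hσ.map (fun w w' h => (Prod.ext_iff.1 h).2)
  · refine hc.imp ?_
    intro c c' hne
    simp only [Function.onFun, List.disjoint_left]
    intro a ha ha'
    rw [List.mem_map] at ha ha'
    obtain ⟨w, _, rfl⟩ := ha
    obtain ⟨w', _, h⟩ := ha'
    have h2 : c' = c := congrArg Prod.fst h
    exact hne h2.symm

lemma legal_append {l₁ l₂ : List (V × W)} (h₁ : IsLegalSeq (lexProd G H) l₁)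
    (hnd : (l₁ ++ l₂).Nodup)
    (h₂ : ∀ q : Fin l₂.length, ∃ z, z ∈ closedNbhd (lexProd G H) (l₂.get q) ∧
      (∀ a ∈ l₁, z ∉ closedNbhd (lexProd G H) a) ∧
      ∀ q' : Fin l₂.length, (q':ℕ) < (q:ℕ) → z ∉ closedNbhd (lexProd G H) (l₂.get q')) :
    IsLegalSeq (lexProd G H) (l₁ ++ l₂) := by
  refine ⟨hnd, ?_⟩
  intro i
  rcases lt_or_ge (i:ℕ) l₁.length with hi | hi
  · obtain ⟨z, hz1, hz2⟩ := h₁.2 ⟨i, hi⟩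
    refine ⟨z, ?_, ?_⟩
    · rwa [List.get_append_left _ _ hi]
    · intro j hj
      have hjl : (j:ℕ) < l₁.length := by omega
      rw [List.get_append_left _ _ hjl]
      exact hz2 ⟨j, hjl⟩ hj
  · have hi2 : (i:ℕ) - l₁.length < l₂.length := by
      have := i.2
      simp only [List.length_append] at this
      omega
    obtain ⟨z, hz1, hz2, hz3⟩ := h₂ ⟨(i:ℕ) - l₁.length, hi2⟩
    refine ⟨z, ?_, ?_⟩
    · have : (l₁ ++ l₂).get i = l₂.get ⟨(i:ℕ) - l₁.length, hi2⟩ := by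
        simp only [List.get_eq_getElem]
        exact List.getElem_append_right (by omega)
      rwa [this]
    · intro j hj
      rcases lt_or_ge (j:ℕ) l₁.length with hjl | hjl
      · rw [List.get_append_left _ _ hjl]
        exact hz2 _ (List.get_mem _ _)
      · have hj2 : (j:ℕ) - l₁.length < l₂.length := by
          have := j.2
          simp only [List.length_append] at this
          omega
        have : (l₁ ++ l₂).get j = l₂.get ⟨(j:ℕ) - l₁.length, hj2⟩ := by
          simp only [List.get_eq_getElem]
          exact List.getElem_append_right (by omega)
        rw [this]
        exact hz3 _ (by simp; omega)

lemma blocks_legal (cols : List V) (σ : List W) (hσ : IsLegalSeq H σ)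
    (hcnd : cols.Nodup) (hnadj : ∀ c ∈ cols, ∀ c' ∈ cols, ¬ G.Adj c c') :
    IsLegalSeq (lexProd G H) (blocksList cols σ) := by
  induction cols using List.reverseRecOn with
  | nil => exact ⟨by simp [blocksList], fun i => absurd i.2 (by simp [blocksList])⟩
  | append_singleton cs c ih =>
    have hcnd' : cs.Nodup := (List.nodup_append.1 hcnd).1
    have hnadj' : ∀ c' ∈ cs, ∀ c'' ∈ cs, ¬ G.Adj c' c'' := by
      intro a ha b hb
      exact hnadj a (by simp [ha]) b (by simp [hb])
    have hbase := ih hcnd' hnadj'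
    have heq : blocksList (cs ++ [c]) σ = blocksList cs σ ++ σ.map (fun w => (c, w)) := by
      simp [blocksList]
    rw [heq]
    refine legal_append hbase ?_ ?_
    · rw [← heq]
      exact blocksList_nodup hcnd hσ.1
    · intro q
      have hq : (q:ℕ) < σ.length := by
        have := q.2; simpa using this
      obtain ⟨v, hv1, hv2⟩ := hσ.2 ⟨q, hq⟩
      have hget : ∀ (r : ℕ) (hr : r < (σ.map (fun w => (c, w))).length),
          (σ.map (fun w => (c, w))).get ⟨r, hr⟩ = (c, σ.get ⟨r, by simpa using hr⟩) := by
        intro r hr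
        simp
      refine ⟨(c, v), ?_, ?_, ?_⟩
      · rw [hget q.val q.2]
        exact mem_closedNbhd_lexProd.2 (Or.inr ⟨rfl, hv1⟩)
      · rintro ⟨c', w'⟩ ha
        rw [mem_blocksList] at ha
        rw [mem_closedNbhd_lexProd]
        rintro (hadj | ⟨hceq, _⟩)
        · exact hnadj c' (List.mem_append_left _ ha.1) c
            (List.mem_append_right _ (List.mem_singleton_self c)) hadj
        · have hcc : c ∉ cs := by
            have h3 := (List.nodup_append.1 hcnd).2.2
            intro hmem
            exact h3 c hmem c (List.mem_singleton_self c) rfl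
          exact hcc (hceq ▸ ha.1)
      · intro q' hq'
        rw [hget q'.val q'.2]
        rw [mem_closedNbhd_lexProd]
        rintro (hadj | ⟨_, hmem⟩)
        · exact G.irrefl hadj
        · exact hv2 ⟨q', by omega⟩ (by simpa using hq') hmem

end Blocks

lemma cycleAdj_val {n : ℕ} {a b : Fin (n+4)} :
    (cycleGraph (n+4)).Adj a b ↔ (a.val + 1 = b.val ∨ b.val + 1 = a.val ∨
      (a.val = n+3 ∧ b.val = 0) ∨ (b.val = n+3 ∧ a.val = 0)) := by
  rw [cycleGraph_adj']
  have h1 : ∀ u v : Fin (n+4), (u - v).val = 1 ↔ u = v + 1 := by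
    intro u v
    rw [show (1:ℕ) = (1 : Fin (n+4)).val from (Fin.val_one _).symm, ← Fin.ext_iff,
      sub_eq_iff_eq_add']
  rw [h1, h1]
  have key : ∀ u v : Fin (n+4), (u = v + 1) ↔ (v.val + 1 = u.val ∨ (v.val = n+3 ∧ u.val = 0)) := by
    intro u v
    rw [Fin.ext_iff, Fin.add_def]
    simp only [Fin.val_one]
    have hv := v.2
    rcases Nat.lt_or_ge (v.val + 1) (n+4) with h | h
    · rw [Nat.mod_eq_of_lt h]; omega
    · have hv3 : v.val = n + 3 := by omega
      rw [hv3]; simp; omega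
  rw [key, key]
  tauto

section LowerEven
variable {k' : ℕ} {W : Type*} {H : SimpleGraph W}

theorem lower_even (σ : List W) (hσ : IsDomSeq H σ) (hσne : σ ≠ [])
    (hpar : (k'+4) % 2 = 0) :
    ∃ l : List (Fin (k'+4) × W), IsDomSeq (lexProd (cycleGraph (k'+4)) H) l ∧
      l.length = ((k'+4)/2) * σ.length := by
  set K := k'+4 with hK
  set cols : List (Fin (k'+4)) :=
    (List.range (K/2)).map (fun i => ((2*i : ℕ) : Fin (k'+4))) with hcols
  have hval : ∀ i : ℕ, i < K/2 → (((2*i : ℕ) : Fin (k'+4))).val = 2*i := by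
    intro i hi
    exact Fin.val_cast_of_lt (by omega)
  have hmemcols : ∀ c : Fin (k'+4), c ∈ cols ↔ ∃ i : ℕ, i < K/2 ∧ (((2*i:ℕ)) : Fin (k'+4)) = c := by
    intro c
    simp [hcols]
  have hvalmem : ∀ c ∈ cols, c.val % 2 = 0 ∧ c.val < K := by
    intro c hc
    obtain ⟨i, hi, hic⟩ := (hmemcols c).1 hc
    constructor
    · rw [← hic, hval i hi]; omega
    · exact c.2
  have hnd : cols.Nodup := by
    refine List.Nodup.map_on ?_ List.nodup_range
    intro i hi j hj hij
    rw [List.mem_range] at hi hj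
    have := congrArg Fin.val hij
    rw [hval i hi, hval j hj] at this
    omega
  have hnadj : ∀ c ∈ cols, ∀ c' ∈ cols, ¬ (cycleGraph (k'+4)).Adj c c' := by
    intro c hc c' hc'
    obtain ⟨h1, h2⟩ := hvalmem c hc
    obtain ⟨h1', h2'⟩ := hvalmem c' hc'
    rw [cycleAdj_val]
    omega
  obtain ⟨s0, hs0⟩ := List.exists_mem_of_ne_nil σ hσne
  refine ⟨blocksList cols σ, ⟨blocks_legal cols σ hσ.1 hnd hnadj, ?_⟩, ?_⟩
  · rintro ⟨c, x⟩
    obtain ⟨s, hsσ, hsx⟩ := hσ.2 x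
    have hc2 := c.2
    by_cases hpc : c.val % 2 = 0
    · -- even column: in a block
      have hmem : c ∈ cols := by
        rw [hmemcols]
        refine ⟨c.val / 2, by omega, ?_⟩
        apply Fin.ext
        rw [hval _ (by omega)]
        omega
      exact ⟨(c, s), mem_blocksList.2 ⟨hmem, hsσ⟩,
        mem_closedNbhd_lexProd.2 (Or.inr ⟨rfl, hsx⟩)⟩
    · -- odd column: adjacent to previous even column
      have hmem : (((c.val - 1 : ℕ)) : Fin (k'+4)) ∈ cols := by
        rw [hmemcols]
        refine ⟨(c.val - 1) / 2, by omega, ?_⟩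
        congr 1
        omega
      refine ⟨((((c.val - 1 : ℕ)) : Fin (k'+4)), s0), mem_blocksList.2 ⟨hmem, hs0⟩,
        mem_closedNbhd_lexProd.2 (Or.inl ?_)⟩
      rw [cycleAdj_val, Fin.val_cast_of_lt (by omega)]
      omega
  · rw [blocksList_length, hcols, List.length_map, List.length_range]

end LowerEven

section LowerOdd
variable {k' : ℕ} {W : Type*} {H : SimpleGraph W}

theorem lower_odd (σ : List W) (hσ : IsDomSeq H σ) (hσne : σ ≠ [])
    (hpar : (k'+4) % 2 = 1) :
    ∃ l : List (Fin (k'+4) × W), IsDomSeq (lexProd (cycleGraph (k'+4)) H) l ∧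
      l.length = ((k'+4)/2) * σ.length + 1 := by
  set K := k'+4 with hK
  have hK5 : 5 ≤ K := by omega
  set B1 := (K-3)/2 with hB1def
  set cols : List (Fin (k'+4)) :=
    (List.range B1).map (fun i => ((2*i : ℕ) : Fin (k'+4))) with hcols
  set cm1 : Fin (k'+4) := ((K-1 : ℕ) : Fin (k'+4)) with hcm1
  set cm2 : Fin (k'+4) := ((K-2 : ℕ) : Fin (k'+4)) with hcm2
  set cm3 : Fin (k'+4) := ((K-3 : ℕ) : Fin (k'+4)) with hcm3
  have hvcm1 : cm1.val = K - 1 := Fin.val_cast_of_lt (by omega)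
  have hvcm2 : cm2.val = K - 2 := Fin.val_cast_of_lt (by omega)
  have hvcm3 : cm3.val = K - 3 := Fin.val_cast_of_lt (by omega)
  have hval : ∀ i : ℕ, i < B1 → (((2*i : ℕ) : Fin (k'+4))).val = 2*i := by
    intro i hi
    exact Fin.val_cast_of_lt (by omega)
  have hmemcols : ∀ c : Fin (k'+4), c ∈ cols ↔ ∃ i : ℕ, i < B1 ∧ (((2*i:ℕ)) : Fin (k'+4)) = c := by
    intro c
    simp [hcols]
  have hvalmem : ∀ c ∈ cols, c.val % 2 = 0 ∧ c.val + 5 ≤ K := by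
    intro c hc
    obtain ⟨i, hi, hic⟩ := (hmemcols c).1 hc
    rw [← hic, hval i hi]
    omega
  obtain ⟨s0, hs0⟩ := List.exists_mem_of_ne_nil σ hσne
  set donor : Fin (k'+4) × W := (cm1, s0) with hdonor
  set part1 : List (Fin (k'+4) × W) := blocksList cols σ ++ [donor] with hpart1
  set blockLast : List (Fin (k'+4) × W) := σ.map (fun w => (cm3, w)) with hblockLast
  set l : List (Fin (k'+4) × W) := part1 ++ blockLast with hl
  have hnd : cols.Nodup := by
    refine List.Nodup.map_on ?_ List.nodup_range
    intro i hi j hj hij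
    rw [List.mem_range] at hi hj
    have := congrArg Fin.val hij
    rw [hval i hi, hval j hj] at this
    omega
  have hnadj : ∀ c ∈ cols, ∀ c' ∈ cols, ¬ (cycleGraph (k'+4)).Adj c c' := by
    intro c hc c' hc'
    obtain ⟨h1, h2⟩ := hvalmem c hc
    obtain ⟨h1', h2'⟩ := hvalmem c' hc'
    rw [cycleAdj_val]
    omega
  have hbase := blocks_legal cols σ hσ.1 hnd hnadj
  -- donor not a member of blocks
  have hdonor_notmem : donor ∉ blocksList cols σ := by
    intro hmem
    have hx : cm1.val % 2 = 0 ∧ cm1.val + 5 ≤ K := hvalmem cm1 (mem_blocksList.1 hmem).1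
    rw [hvcm1] at hx
    omega
  have hstep1 : IsLegalSeq (lexProd (cycleGraph (k'+4)) H) part1 := by
    refine legal_append hbase ?_ ?_
    · rw [List.nodup_append]
      refine ⟨blocksList_nodup hnd hσ.1.1, List.nodup_singleton _, ?_⟩
      intro a ha b ha' hab
      rw [List.mem_singleton] at ha'
      exact hdonor_notmem (ha' ▸ hab ▸ ha)
    · intro q
      have hq0 : (q : ℕ) = 0 := by
        have h9 : (q:ℕ) < 1 := by simpa using q.isLt
        omega
      have hget : ([donor].get q) = donor := by
        rcases q with ⟨qv, hqv⟩
        simp at hq0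
        subst hq0
        rfl
      rw [hget]
      refine ⟨(cm2, s0), ?_, ?_, ?_⟩
      · refine mem_closedNbhd_lexProd.2 (Or.inl ?_)
        rw [cycleAdj_val, hvcm1, hvcm2]
        omega
      · rintro ⟨c', w'⟩ ha
        have hc'full : c'.val % 2 = 0 ∧ c'.val + 5 ≤ K := hvalmem c' (mem_blocksList.1 ha).1
        obtain ⟨hc'2, hc'⟩ := hc'full
        rw [mem_closedNbhd_lexProd]
        rintro (hadj | ⟨heq, _⟩)
        · rw [cycleAdj_val, hvcm2] at hadj
          omega
        · have := congrArg Fin.val heq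
          rw [hvcm2] at this
          omega
      · intro q' hq'
        omega
  have hlegal : IsLegalSeq (lexProd (cycleGraph (k'+4)) H) l := by
    refine legal_append hstep1 ?_ ?_
    · rw [List.nodup_append]
      refine ⟨hstep1.1, ?_, ?_⟩
      · refine List.Nodup.map ?_ hσ.1.1
        intro w w' h
        exact (Prod.ext_iff.1 h).2
      · rintro ⟨c', w'⟩ ha b ha' rfl
        rw [List.mem_map] at ha'
        obtain ⟨w'', _, hww⟩ := ha'
        have hc'3 : c' = cm3 := (congrArg Prod.fst hww).symm
        rw [hpart1, List.mem_append] at ha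
        rcases ha with ha | ha
        · have hx : c'.val % 2 = 0 ∧ c'.val + 5 ≤ K := hvalmem c' (mem_blocksList.1 ha).1
          have hy := congrArg Fin.val hc'3
          rw [hvcm3] at hy
          omega
        · rw [List.mem_singleton] at ha
          have := congrArg (fun p => (Prod.fst p).val) ha
          simp only [hc'3, hvcm3, hdonor, hvcm1] at this
          omega
    · intro q
      have hq : (q : ℕ) < σ.length := by have := q.2; simpa [hblockLast] using this
      obtain ⟨v, hv1, hv2⟩ := hσ.1.2 ⟨q, hq⟩
      have hget : ∀ (r : ℕ) (hr : r < blockLast.length),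
          blockLast.get ⟨r, hr⟩ = (cm3, σ.get ⟨r, by simpa [hblockLast] using hr⟩) := by
        intro r hr
        simp [hblockLast]
      refine ⟨(cm3, v), ?_, ?_, ?_⟩
      · rw [hget q.val q.2]
        exact mem_closedNbhd_lexProd.2 (Or.inr ⟨rfl, hv1⟩)
      · rintro ⟨c', w'⟩ ha
        rw [hpart1, List.mem_append] at ha
        rw [mem_closedNbhd_lexProd]
        rcases ha with ha | ha
        · obtain ⟨h1, h2⟩ : c'.val % 2 = 0 ∧ c'.val + 5 ≤ K :=
            hvalmem c' (mem_blocksList.1 ha).1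
          rintro (hadj | ⟨heq, _⟩)
          · rw [cycleAdj_val, hvcm3] at hadj
            omega
          · have := congrArg Fin.val heq
            rw [hvcm3] at this
            omega
        · rw [List.mem_singleton] at ha
          have hfst : c' = cm1 := congrArg Prod.fst ha
          have hv1' : c'.val = K - 1 := by rw [hfst]; exact hvcm1
          rintro (hadj | ⟨heq, _⟩)
          · rw [cycleAdj_val, hv1', hvcm3] at hadj
            omega
          · have hz := congrArg Fin.val heq
            rw [hv1', hvcm3] at hz
            omega
      · intro q' hq'
        rw [hget q'.val q'.2]
        rw [mem_closedNbhd_lexProd]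
        rintro (hadj | ⟨_, hmem⟩)
        · exact (SimpleGraph.irrefl _) hadj
        · exact hv2 ⟨q', by omega⟩ (by simpa using hq') hmem
  refine ⟨l, ⟨hlegal, ?_⟩, ?_⟩
  · rintro ⟨c, x⟩
    obtain ⟨s, hsσ, hsx⟩ := hσ.2 x
    have hc2 := c.2
    have hmem_l_blocks : ∀ a, a ∈ blocksList cols σ → a ∈ l := by
      intro a ha
      rw [hl, hpart1]
      exact List.mem_append_left _ (List.mem_append_left _ ha)
    have hmem_l_donor : donor ∈ l := by
      rw [hl, hpart1]
      exact List.mem_append_left _ (List.mem_append_right _ (List.mem_singleton_self _))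
    have hmem_l_last : ∀ w ∈ σ, (cm3, w) ∈ l := by
      intro w hw
      rw [hl]
      refine List.mem_append_right _ ?_
      rw [hblockLast, List.mem_map]
      exact ⟨w, hw, rfl⟩
    by_cases hpc : c.val % 2 = 0
    · rcases Nat.lt_or_ge c.val (K-3) with hsmall | hbig
      · -- even, ≤ K-5 : own block
        have hmem : c ∈ cols := by
          rw [hmemcols]
          refine ⟨c.val / 2, by omega, ?_⟩
          apply Fin.ext
          rw [hval _ (by omega)]
          omega
        exact ⟨(c, s), hmem_l_blocks _ (mem_blocksList.2 ⟨hmem, hsσ⟩),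
          mem_closedNbhd_lexProd.2 (Or.inr ⟨rfl, hsx⟩)⟩
      · rcases Nat.eq_or_lt_of_le hbig with hKm3 | hbig2
        · -- c = K-3 : last block
          have hc3 : c = cm3 := by
            apply Fin.ext
            rw [hvcm3]
            omega
          exact ⟨(cm3, s), hmem_l_last s hsσ,
            mem_closedNbhd_lexProd.2 (Or.inr ⟨hc3.symm, hsx⟩)⟩
        · -- c = K-1 (even since K odd) : adjacent to column 0
          have hKm1 : c.val = K - 1 := by omega
          have hmem0 : ((2*0 : ℕ) : Fin (k'+4)) ∈ cols := by
            rw [hmemcols]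
            exact ⟨0, by omega, rfl⟩
          refine ⟨(((2*0:ℕ) : Fin (k'+4)), s0), hmem_l_blocks _ (mem_blocksList.2 ⟨hmem0, hs0⟩),
            mem_closedNbhd_lexProd.2 (Or.inl ?_)⟩
          rw [cycleAdj_val, hval 0 (by omega)]
          omega
    · rcases Nat.lt_or_ge c.val (K-2) with hsmall | hbig
      · -- odd, ≤ K-4 : adjacent to even column ≤ K-5
        have hmem : (((c.val - 1 : ℕ)) : Fin (k'+4)) ∈ cols := by
          rw [hmemcols]
          refine ⟨(c.val - 1) / 2, by omega, ?_⟩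
          congr 1
          omega
        refine ⟨((((c.val - 1 : ℕ)) : Fin (k'+4)), s0),
          hmem_l_blocks _ (mem_blocksList.2 ⟨hmem, hs0⟩),
          mem_closedNbhd_lexProd.2 (Or.inl ?_)⟩
        rw [cycleAdj_val, Fin.val_cast_of_lt (by omega)]
        omega
      · -- c = K-2 : adjacent to K-3
        have hKm2 : c.val = K - 2 := by omega
        refine ⟨(cm3, s0), hmem_l_last s0 hs0,
          mem_closedNbhd_lexProd.2 (Or.inl ?_)⟩
        rw [cycleAdj_val, hvcm3]
        omega
  · have hlen1 : cols.length = B1 := by rw [hcols, List.length_map, List.length_range]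
    have hlen2 : blockLast.length = σ.length := by rw [hblockLast, List.length_map]
    rw [hl, List.length_append, hpart1, List.length_append, blocksList_length,
      List.length_singleton, hlen1, hlen2]
    have hB1 : B1 + 1 = K/2 := by omega
    rw [← hB1]
    ring

end LowerOdd


set_option maxHeartbeats 1000000 in
theorem stmt_11 {W : Type*} [Fintype W] (H : SimpleGraph W)
    (hH : ∃ u v : W, u ≠ v ∧ ¬ H.Adj u v) (k : ℕ) (hk : 3 < k) :
    (k % 2 = 0 →
      grundyDomNum (lexProd (cycleGraph k) H) = (k / 2) * grundyDomNum H) ∧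
    (k % 2 = 1 →
      grundyDomNum (lexProd (cycleGraph k) H) = (k / 2) * grundyDomNum H + 1) := by
  obtain ⟨k', rfl⟩ : ∃ k', k = k' + 4 := ⟨k - 4, by omega⟩
  obtain ⟨u, v, huv, hnadj⟩ := hH
  have hWne : Nonempty W := ⟨u⟩
  -- the Grundy domination number of H is at least 2
  have hlegal_uv : IsLegalSeq H [u, v] := by
    constructor
    · simp [huv]
    · intro i
      rcases i with ⟨iv, hiv⟩
      have hiv2 : iv < 2 := by simpa using hiv
      interval_cases iv
      · refine ⟨u, self_mem_closedNbhd u, ?_⟩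
        intro j hj
        simp at hj
      · refine ⟨v, self_mem_closedNbhd v, ?_⟩
        intro j hj
        rcases j with ⟨jv, hjv⟩
        have hjv0 : jv = 0 := by simpa using hj
        subst hjv0
        rw [show ([u,v].get ⟨0, hjv⟩) = u from rfl, mem_closedNbhd']
        push_neg
        exact ⟨huv.symm, fun h => hnadj h⟩
  have hm2 : 2 ≤ grundyDomNum H := by
    have := legal_le_grundy [u, v] hlegal_uv
    simpa using this
  obtain ⟨mp, hmp⟩ : ∃ mp, grundyDomNum H = mp + 2 := ⟨grundyDomNum H - 2, by omega⟩
  have hmB : ∀ τ : List W, IsLegalSeq H τ → τ.length ≤ mp + 2 := by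
    intro τ hτ
    have := legal_le_grundy τ hτ
    omega
  obtain ⟨σ, hσdom, hσlen⟩ := exists_dom_grundy (G := H)
  have hσne : σ ≠ [] := by
    intro h
    rw [h] at hσlen
    simp at hσlen
    omega
  have hupper : ∀ n ∈ {n | ∃ l : List (Fin (k'+4) × W),
      IsDomSeq (lexProd (cycleGraph (k'+4)) H) l ∧ l.length = n},
      n ≤ mp * ((k'+4)/2) + (k'+4) := by
    rintro n ⟨l, hl, rfl⟩
    exact upper_bound hmB l hl.1
  constructor
  · intro hpar
    obtain ⟨l, hldom, hllen⟩ := lower_even (k' := k') σ hσdom hσne hpar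
    have harith : mp * ((k'+4)/2) + (k'+4) = ((k'+4)/2) * grundyDomNum H := by
      rw [hmp, Nat.mul_add]
      have h2 : ((k'+4)/2) * 2 = k'+4 := by omega
      rw [h2, Nat.mul_comm]
    apply le_antisymm
    · refine csSup_le ⟨l.length, l, hldom, rfl⟩ ?_
      intro n hn
      have := hupper n hn
      omega
    · refine le_csSup bddAbove_dom ⟨l, hldom, ?_⟩
      rw [hllen, hσlen]
  · intro hpar
    obtain ⟨l, hldom, hllen⟩ := lower_odd (k' := k') σ hσdom hσne hpar
    have harith : mp * ((k'+4)/2) + (k'+4) = ((k'+4)/2) * grundyDomNum H + 1 := by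
      rw [hmp, Nat.mul_add]
      have h2 : ((k'+4)/2) * 2 + 1 = k'+4 := by omega
      have h3 : mp * ((k'+4)/2) + (k'+4) = ((k'+4)/2) * mp + (((k'+4)/2) * 2 + 1) := by
        rw [h2, Nat.mul_comm]
      rw [h3]
      ring
    apply le_antisymm
    · refine csSup_le ⟨l.length, l, hldom, rfl⟩ ?_
      intro n hn
      have := hupper n hn
      omega
    · refine le_csSup bddAbove_dom ⟨l, hldom, ?_⟩
      rw [hllen, hσlen]
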